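/- Let R be a finite commutative ring with nonzero identity that is not a field, and let n ≥ 2 be an integer. Then the domination number of TD(R,n) is at most k + |R| − 2, where k is the number of non-invertible elements of R; i.e., TD(R,n) has a dominating set of cardinality at most k + |R| − 2. -/

import Mathlib

open SimpleGraph

/-- The total dot product graph `TD(R,n)`: vertices are the nonzero vectors of `R^n`,
and two distinct vertices are adjacent iff their dot product is `0`. -/
def TD (R : Type*) [CommRing R] (n : ℕ) :
    SimpleGraph {x : Fin n → R // x ≠ 0} where
  Adj a b := a ≠ b ∧ ∑ i, a.1 i * b.1 i = 0
  symm := by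
    constructor
    intro a b ⟨hne, h⟩
    exact ⟨hne.symm, by simpa [mul_comm] using h⟩
  loopless := by
    constructor
    intro a ⟨hne, _⟩
    exact hne rfl

/-!
Dominate `TD(R,n)` by vectors supported on the first two coordinates. In a finite ring the
nonunits are exactly the zero divisors, so a vertex `v` with `v₀` a nonunit is orthogonal to some
`(c, 0, …, 0)` with `c` a nonzero nonunit (when `v₀ = 0`, any nonzero nonunit will do, and one
exists because `R` is not a field); similarly `v` is orthogonal to some `(0, c, 0, …, 0)` when `v₁`
is a nonunit; and if `v₀, v₁` are both units, `v` is orthogonal to `(1, -v₀v₁⁻¹, 0, …, 0)`. This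
takes `|R| - k` vectors of the first kind and `k - 1` of each of the other two.
-/

section DominatingVectors

variable {R : Type*} [CommRing R]

theorem exists_mem_nonunits_diff_zero_mul_eq_zero [Finite R] [Nontrivial R] (hR : ¬IsField R)
    {a : R} (ha : ¬IsUnit a) : ∃ c ∈ nonunits R \ {0}, a * c = 0 := by
  rcases eq_or_ne a 0 with rfl | ha0
  · obtain ⟨c, hc0, hc⟩ := Ring.exists_not_isUnit_of_not_isField hR
    exact ⟨c, ⟨hc, hc0⟩, zero_mul c⟩
  · rw [isUnit_iff_mem_nonZeroDivisors_of_finite, notMem_nonZeroDivisors_iff_left] at ha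
    obtain ⟨c, hac, hc0⟩ := ha
    exact ⟨c, ⟨fun hc => ha0 (hc.mul_left_eq_zero.mp hac), hc0⟩, hac⟩

variable {m : ℕ}

def pairVec (a b : R) : Fin (m + 2) → R := Matrix.vecCons a (Matrix.vecCons b 0)

@[simp]
theorem pairVec_eq_zero_iff {a b : R} : (pairVec a b : Fin (m + 2) → R) = 0 ↔ a = 0 ∧ b = 0 := by
  simp [pairVec]

theorem dotProduct_pairVec (v : Fin (m + 2) → R) (a b : R) :
    v ⬝ᵥ pairVec a b = v 0 * a + v 1 * b := by
  simp [dotProduct, pairVec, Fin.sum_univ_succ]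

variable (R m) in
def dominatingVectors : Set (Fin (m + 2) → R) :=
  pairVec 1 '' {u | IsUnit u} ∪ (pairVec · 0) '' (nonunits R \ {0}) ∪
    pairVec 0 '' (nonunits R \ {0})

theorem ne_zero_of_mem_dominatingVectors [Nontrivial R] {d : Fin (m + 2) → R}
    (hd : d ∈ dominatingVectors R m) : d ≠ 0 := by
  rcases hd with (⟨u, -, rfl⟩ | ⟨c, ⟨-, hc0⟩, rfl⟩) | ⟨c, ⟨-, hc0⟩, rfl⟩ <;> simp_all

theorem exists_mem_dominatingVectors_dotProduct_eq_zero [Finite R] [Nontrivial R]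
    (hR : ¬IsField R) (v : Fin (m + 2) → R) :
    ∃ d ∈ dominatingVectors R m, v ⬝ᵥ d = 0 := by
  by_cases h0 : IsUnit (v 0)
  · by_cases h1 : IsUnit (v 1)
    · have hu : IsUnit (-(v 0 * ↑h1.unit⁻¹)) := (h0.mul h1.unit⁻¹.isUnit).neg
      refine ⟨pairVec 1 _, .inl (.inl ⟨_, hu, rfl⟩), ?_⟩
      rw [dotProduct_pairVec, mul_neg, mul_left_comm, h1.mul_val_inv, mul_one, add_neg_cancel]
    · obtain ⟨c, hc, hvc⟩ := exists_mem_nonunits_diff_zero_mul_eq_zero hR h1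
      exact ⟨pairVec 0 c, .inr ⟨c, hc, rfl⟩, by simp [dotProduct_pairVec, hvc]⟩
  · obtain ⟨c, hc, hvc⟩ := exists_mem_nonunits_diff_zero_mul_eq_zero hR h0
    exact ⟨pairVec c 0, .inl (.inr ⟨c, hc, rfl⟩), by simp [dotProduct_pairVec, hvc]⟩

theorem ncard_dominatingVectors_le [Finite R] [Nontrivial R] :
    (dominatingVectors R m).ncard ≤ (nonunits R).ncard + Nat.card R - 2 := by
  have hunits : {u : R | IsUnit u}.ncard + (nonunits R).ncard = Nat.card R :=
    Set.ncard_add_ncard_compl _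
  have hzero : (0 : R) ∈ nonunits R := zero_mem_nonunits.mpr zero_ne_one
  have hnonzero : (nonunits R \ {0}).ncard = (nonunits R).ncard - 1 :=
    Set.ncard_sdiff_singleton_of_mem hzero
  have hpos : 0 < (nonunits R).ncard := (Set.ncard_pos).mpr ⟨0, hzero⟩
  calc (dominatingVectors R m).ncard
      ≤ (pairVec 1 '' {u | IsUnit u}).ncard + ((pairVec · 0) '' (nonunits R \ {0})).ncard +
          (pairVec 0 '' (nonunits R \ {0})).ncard :=
        (Set.ncard_union_le _ _).trans (Nat.add_le_add_right (Set.ncard_union_le _ _) _)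
    _ ≤ {u : R | IsUnit u}.ncard + (nonunits R \ {0}).ncard + (nonunits R \ {0}).ncard := by
        gcongr <;> exact Set.ncard_image_le
    _ ≤ (nonunits R).ncard + Nat.card R - 2 := by omega

end DominatingVectors

/-- if `R` is a finite commutative ring with nonzero identity that is not a
field and `n ≥ 2`, then `TD(R,n)` has a dominating set of size at most `k + |R| - 2`,
where `k` is the number of non-invertible elements of `R`. -/
theorem stmt11 (R : Type*) [CommRing R] [Fintype R] [Nontrivial R]
    (hR : ¬ IsField R) (n : ℕ) (hn : 2 ≤ n)
    (k : ℕ) (hk : k = Nat.card {x : R // ¬ IsUnit x}) :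
    ∃ D : Finset {x : Fin n → R // x ≠ 0},
      (∀ v ∉ D, ∃ d ∈ D, (TD R n).Adj v d) ∧ D.card ≤ k + Fintype.card R - 2 := by
  classical
  obtain ⟨m, rfl⟩ := Nat.exists_eq_add_of_le' hn
  let S := (dominatingVectors R m).toFinite.toFinset
  refine ⟨S.subtype (· ≠ 0), fun v hv => ?_, ?_⟩
  · obtain ⟨d, hdS, hvd⟩ := exists_mem_dominatingVectors_dotProduct_eq_zero hR v.1
    have hdD : ⟨d, ne_zero_of_mem_dominatingVectors hdS⟩ ∈ S.subtype (· ≠ 0) := by simpa [S]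
    exact ⟨_, hdD, ne_of_mem_of_not_mem hdD hv |>.symm, hvd⟩
  · calc (S.subtype (· ≠ 0)).card ≤ S.card :=
        (Finset.card_subtype _ _).trans_le (Finset.card_filter_le _ _)
      _ = (dominatingVectors R m).ncard := (Set.ncard_eq_toFinset_card _).symm
      _ ≤ k + Fintype.card R - 2 := by
        rw [hk, ← Nat.card_eq_fintype_card]
        exact ncard_dominatingVectors_le
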